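/- For any field K, the center of Γ is isomorphic as a K-algebra to the subalgebra R = { f ∈ K[x,y] : f(x,0) is a constant } of the polynomial ring K[x,y] (equivalently, R = K·1 + y·K[x,y]). (In char 2 the isomorphism sends a ↦ x, b ↦ y on the spanning set; in char ≠ 2 it sends a² ↦ x, b² ↦ y.) -/

import Mathlib

set_option synthInstance.maxHeartbeats 1000000
set_option maxHeartbeats 1000000

variable (K : Type*) [Field K]

/-- Relations defining `Γ = KQ/(ab + ba, bc)` (the Koszul dual situation):
generators `e = ι 0`, `a = ι 1`, `b = ι 2`, `c = ι 3`, with the path algebra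
relations for the quiver with two vertices, loops `a, b` at vertex 1 and an
arrow `c`, together with `ab + ba = 0` and `bc = 0`. -/
inductive Grel : FreeAlgebra K (Fin 4) → FreeAlgebra K (Fin 4) → Prop
  | ee : Grel (FreeAlgebra.ι K 0 * FreeAlgebra.ι K 0) (FreeAlgebra.ι K 0)
  | ea : Grel (FreeAlgebra.ι K 0 * FreeAlgebra.ι K 1) (FreeAlgebra.ι K 1)
  | ae : Grel (FreeAlgebra.ι K 1 * FreeAlgebra.ι K 0) (FreeAlgebra.ι K 1)
  | eb : Grel (FreeAlgebra.ι K 0 * FreeAlgebra.ι K 2) (FreeAlgebra.ι K 2)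
  | be : Grel (FreeAlgebra.ι K 2 * FreeAlgebra.ι K 0) (FreeAlgebra.ι K 2)
  | ec : Grel (FreeAlgebra.ι K 0 * FreeAlgebra.ι K 3) (FreeAlgebra.ι K 3)
  | ce : Grel (FreeAlgebra.ι K 3 * FreeAlgebra.ι K 0) 0
  | abba : Grel (FreeAlgebra.ι K 1 * FreeAlgebra.ι K 2 + FreeAlgebra.ι K 2 * FreeAlgebra.ι K 1) 0
  | bc : Grel (FreeAlgebra.ι K 2 * FreeAlgebra.ι K 3) 0

/-- The algebra `Γ` (whose center computes `Z_gr(E(𝒜)) ≅ HH*(𝒜)/𝒩`). -/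
abbrev Galg := RingQuot (Grel K)

noncomputable def eG : Galg K := RingQuot.mkAlgHom K (Grel K) (FreeAlgebra.ι K 0)
noncomputable def aG : Galg K := RingQuot.mkAlgHom K (Grel K) (FreeAlgebra.ι K 1)
noncomputable def bG : Galg K := RingQuot.mkAlgHom K (Grel K) (FreeAlgebra.ι K 2)
noncomputable def cG : Galg K := RingQuot.mkAlgHom K (Grel K) (FreeAlgebra.ι K 3)

/-- The substitution `y ↦ 0` on `K[x,y]` (with `x = X 0`, `y = X 1`). -/
noncomputable def substY0 : MvPolynomial (Fin 2) K →ₐ[K] MvPolynomial (Fin 2) K :=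
  MvPolynomial.aeval (fun i => if i = 0 then MvPolynomial.X 0 else 0)

/-- The subalgebra `R = { f ∈ K[x,y] : f(x,0) is a constant } = K·1 + y·K[x,y]`
of the polynomial ring `K[x,y]`. -/
noncomputable def Rsub : Subalgebra K (MvPolynomial (Fin 2) K) :=
  Subalgebra.comap (substY0 K) ⊥

/-!
Write `P = K[x,y]`. Modulo the relations every element of `Γ` is
`f(a,b)·e + g(a,b)·c + r·(1 - e)` with `f, g ∈ P` written in the normal-ordered monomials
`e aⁱ bʲ`, and `g(a,b)·c` only depends on `g(x,0)` since `bc = 0`. Left multiplication on such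
triples `(f, g, r)` gives a representation of `Γ` on `P × P × K`: `e` forgets `r`, `a` multiplies
`f` and `g` by `x`, `b` sends `f` to `y·f(-x,y)` (because `ba = -ab`) and `c` moves `r` into the
second slot. The map `ofModel` from triples back to `Γ` is `Γ`-linear and sends `(1,0,1)` to `1`,
so `ev : z ↦ z·(1,0,1)` is injective and computations in `Γ` can be done in the model.

For `z` represented by `(f, g, r)`, commuting with `e`, `b`, `a`, `c` means exactly `g(x,0) = 0`,
`f(-x,y) = f`, `f(x,-y) = f` and `f(x,0) = r`; on such elements multiplication is the product of
the `f`'s. Hence the center is isomorphic to the algebra of `f ∈ R` invariant under both sign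
changes. In characteristic `2` the sign changes are trivial; otherwise the invariants are the
polynomials in `x², y²`, and `x ↦ x², y ↦ y²` maps `R` isomorphically onto them.
-/

namespace MvPolynomial

section CommSemiring

variable {σ R : Type*} [CommSemiring R]

lemma X_mul_monomial (i : σ) (d : σ →₀ ℕ) (r : R) :
    X i * monomial d r = monomial (Finsupp.single i 1 + d) r := by
  rw [monomial_single_add, pow_one]

lemma monomial_eq_smul_X_pow (d : Fin 2 →₀ ℕ) (r : R) :
    monomial d r = r • (X 0 ^ d 0 * X 1 ^ d 1) := by
  rw [monomial_eq, Finsupp.prod_fintype _ _ fun _ => pow_zero _, Fin.prod_univ_two, smul_eq_C_mul]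

end CommSemiring

variable {σ R : Type*} [CommRing R] [DecidableEq σ]

noncomputable def negVar (i : σ) : MvPolynomial σ R →ₐ[R] MvPolynomial σ R :=
  aeval (Function.update X i (-X i))

@[simp] lemma negVar_X_self (i : σ) : negVar i (X i : MvPolynomial σ R) = -X i := by
  simp [negVar]

@[simp] lemma negVar_X_of_ne {i j : σ} (h : j ≠ i) :
    negVar i (X j : MvPolynomial σ R) = X j := by
  simp [negVar, h]

lemma negVar_monomial (i : σ) (d : σ →₀ ℕ) (r : R) :
    negVar i (monomial d r) = monomial d ((-1) ^ d i * r) := by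
  have hX : Function.update X i (-X i) =
      fun j => C (if j = i then -1 else 1) * (X j : MvPolynomial σ R) := by
    ext1 j; by_cases h : j = i <;> simp [h]
  have hsign : (d.prod fun j k => (if j = i then (-1 : R) else 1) ^ k) = (-1) ^ d i := by
    simp only [ite_pow, one_pow, Finsupp.prod_ite_eq', Finsupp.mem_support_iff, ne_eq, ite_not]
    split_ifs with h <;> simp [h]
  rw [negVar, aeval_monomial, hX, monomial_eq, C_mul, ← hsign, map_finsuppProd]
  simp only [mul_pow, Finsupp.prod_mul, map_pow, algebraMap_eq]
  ring

lemma coeff_negVar (i : σ) (d : σ →₀ ℕ) (f : MvPolynomial σ R) :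
    coeff d (negVar i f) = (-1) ^ d i * coeff d f := by
  induction f using induction_on' with
  | monomial d' r =>
    rw [negVar_monomial, coeff_monomial, coeff_monomial]
    split_ifs with h <;> simp [h]
  | add p q hp hq => simp [hp, hq, mul_add]

lemma negVar_eq_self_of_two_eq_zero (h2 : (2 : R) = 0) (i : σ) (f : MvPolynomial σ R) :
    negVar i f = f := by
  have hneg : (-1 : R) = 1 := by linear_combination -h2
  ext d
  rw [coeff_negVar, hneg, one_pow, one_mul]

lemma negVar_expand_two (i : σ) (f : MvPolynomial σ R) : negVar i (expand 2 f) = expand 2 f := by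
  ext d
  rw [coeff_negVar]
  by_cases h : 2 ∣ d i
  · obtain ⟨k, hk⟩ := h
    rw [hk, pow_mul, neg_one_sq, one_pow, one_mul]
  · rw [coeff_expand_of_not_dvd _ h, mul_zero]

variable (σ R) in
noncomputable def signInvariants : Subalgebra R (MvPolynomial σ R) :=
  ⨅ i, AlgHom.equalizer (negVar i) (AlgHom.id R _)

lemma mem_signInvariants {f : MvPolynomial σ R} :
    f ∈ signInvariants σ R ↔ ∀ i, negVar i f = f := by
  simp [signInvariants, Algebra.mem_iInf, AlgHom.mem_equalizer]

lemma signInvariants_eq_top (h2 : (2 : R) = 0) : signInvariants σ R = ⊤ :=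
  eq_top_iff.2 fun f _ => mem_signInvariants.2 fun i => negVar_eq_self_of_two_eq_zero h2 i f

lemma even_of_mem_signInvariants [NoZeroDivisors R] (h2 : (2 : R) ≠ 0)
    {f : MvPolynomial σ R} (hf : f ∈ signInvariants σ R) {d : σ →₀ ℕ}
    (hd : d ∈ f.support) (i : σ) :
    Even (d i) := by
  by_contra hodd
  have h := congrArg (coeff d) (mem_signInvariants.1 hf i)
  rw [coeff_negVar, (Nat.not_even_iff_odd.1 hodd).neg_one_pow] at h
  have : (2 : R) * coeff d f = 0 := by linear_combination -h
  exact mem_support_iff.1 hd ((mul_eq_zero.1 this).resolve_left h2)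

lemma signInvariants_eq_range_expand [NoZeroDivisors R] (h2 : (2 : R) ≠ 0) :
    signInvariants σ R = (expand 2).range := by
  refine le_antisymm (fun f hf => ?_) ?_
  · rw [AlgHom.mem_range]
    refine ⟨∑ d ∈ f.support,
      monomial (d.mapRange (· / 2) (Nat.zero_div 2)) (coeff d f), ?_⟩
    conv_rhs => rw [← support_sum_monomial_coeff f]
    refine (map_sum _ _ _).trans (Finset.sum_congr rfl fun d hd => ?_)
    have halve : 2 • d.mapRange (· / 2) (Nat.zero_div 2) = d := by
      ext i
      simp [Nat.mul_div_cancel' (even_of_mem_signInvariants h2 hf hd i).two_dvd]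
    rw [expand_monomial, halve]
  · rintro _ ⟨g, rfl⟩
    exact mem_signInvariants.2 fun i => negVar_expand_two i g

end MvPolynomial

section SubstY0

open MvPolynomial

variable {K}

lemma mem_Rsub_iff {f : MvPolynomial (Fin 2) K} : f ∈ Rsub K ↔ ∃ r, substY0 K f = C r := by
  simp [Rsub, Algebra.mem_bot, eq_comm]

@[simp] lemma substY0_X_zero : substY0 K (X 0) = X 0 := by simp [substY0]

@[simp] lemma substY0_X_one : substY0 K (X 1) = 0 := by simp [substY0]

lemma substY0_expand {p : ℕ} (hp : p ≠ 0) (f : MvPolynomial (Fin 2) K) :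
    substY0 K (expand p f) = expand p (substY0 K f) := by
  have : (substY0 K).comp (expand p) = (expand p).comp (substY0 K) := by
    ext i
    fin_cases i <;> simp [zero_pow hp]
  exact DFunLike.congr_fun this f

lemma Rsub_map_expand {p : ℕ} (hp : 0 < p) :
    (Rsub K).map (expand p) = (expand p).range ⊓ Rsub K := by
  ext f
  simp only [Subalgebra.mem_map, Algebra.mem_inf, AlgHom.mem_range, mem_Rsub_iff]
  constructor
  · rintro ⟨g, ⟨r, hr⟩, rfl⟩
    exact ⟨⟨g, rfl⟩, r, by rw [substY0_expand hp.ne', hr, expand_C]⟩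
  · rintro ⟨⟨g, rfl⟩, r, hr⟩
    exact ⟨g, ⟨r, (expand_eq_C hp).1 (by rw [← substY0_expand hp.ne', hr])⟩, rfl⟩

end SubstY0

namespace Galg

open MvPolynomial

variable {K}

@[simp] lemma eG_mul_eG : eG K * eG K = eG K := by
  simpa [eG] using RingQuot.mkAlgHom_rel K (Grel.ee (K := K))
@[simp] lemma eG_mul_aG : eG K * aG K = aG K := by
  simpa [eG, aG] using RingQuot.mkAlgHom_rel K (Grel.ea (K := K))
@[simp] lemma aG_mul_eG : aG K * eG K = aG K := by
  simpa [eG, aG] using RingQuot.mkAlgHom_rel K (Grel.ae (K := K))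
@[simp] lemma eG_mul_bG : eG K * bG K = bG K := by
  simpa [eG, bG] using RingQuot.mkAlgHom_rel K (Grel.eb (K := K))
@[simp] lemma bG_mul_eG : bG K * eG K = bG K := by
  simpa [eG, bG] using RingQuot.mkAlgHom_rel K (Grel.be (K := K))
@[simp] lemma eG_mul_cG : eG K * cG K = cG K := by
  simpa [eG, cG] using RingQuot.mkAlgHom_rel K (Grel.ec (K := K))
@[simp] lemma cG_mul_eG : cG K * eG K = 0 := by
  simpa [eG, cG] using RingQuot.mkAlgHom_rel K (Grel.ce (K := K))
@[simp] lemma bG_mul_cG : bG K * cG K = 0 := by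
  simpa [bG, cG] using RingQuot.mkAlgHom_rel K (Grel.bc (K := K))

lemma bG_mul_aG : bG K * aG K = (-1 : K) • (aG K * bG K) := by
  have habba : aG K * bG K + bG K * aG K = 0 := by
    simpa [aG, bG] using RingQuot.mkAlgHom_rel K (Grel.abba (K := K))
  exact (eq_neg_of_add_eq_zero_right habba).trans (neg_one_smul K _).symm

lemma bG_mul_aG_pow (i : ℕ) : bG K * aG K ^ i = (-1 : K) ^ i • (aG K ^ i * bG K) := by
  induction i with
  | zero => simp
  | succ i ih =>
    rw [pow_succ, ← mul_assoc, ih, smul_mul_assoc, mul_assoc, bG_mul_aG, mul_smul_comm, smul_smul,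
      ← mul_assoc, ← pow_succ, ← pow_succ]

lemma adjoin_generators : Algebra.adjoin K {eG K, aG K, bG K, cG K} = ⊤ := by
  have hrange : Set.range (RingQuot.mkAlgHom K (Grel K) ∘ FreeAlgebra.ι K) =
      {eG K, aG K, bG K, cG K} := by
    ext z
    simp [Fin.exists_fin_succ, eG, aG, bG, cG, eq_comm]
  rw [← hrange, Set.range_comp, Algebra.adjoin_image, FreeAlgebra.adjoin_range_ι,
    Algebra.map_top, AlgHom.range_eq_top]
  exact RingQuot.mkAlgHom_surjective K (Grel K)

lemma mem_center_iff_commute {z : Galg K} : z ∈ Subalgebra.center K (Galg K) ↔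
    Commute z (eG K) ∧ Commute z (aG K) ∧ Commute z (bG K) ∧ Commute z (cG K) := by
  refine ⟨fun hz => ?_, fun ⟨he, ha, hb, hc⟩ => Subalgebra.mem_center_iff.2 fun g => ?_⟩
  · have hc := Subalgebra.mem_center_iff.1 hz
    exact ⟨(hc _).symm, (hc _).symm, (hc _).symm, (hc _).symm⟩
  · refine (Algebra.commute_of_mem_adjoin_of_forall_mem_commute (s := {eG K, aG K, bG K, cG K})
      (adjoin_generators (K := K) ▸ Algebra.mem_top) ?_).symm.eq
    rintro g (rfl | rfl | rfl | rfl) <;> assumption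

noncomputable def mono (i j : ℕ) : Galg K := eG K * aG K ^ i * bG K ^ j

@[simp] lemma mono_zero_zero : mono (K := K) 0 0 = eG K := by simp [mono]

lemma eG_mul_mono (i j : ℕ) : eG K * mono i j = mono i j := by
  simp only [mono, ← mul_assoc, eG_mul_eG]

lemma aG_mul_mono (i j : ℕ) : aG K * mono i j = mono (i + 1) j := by
  simp only [mono, ← mul_assoc, aG_mul_eG, pow_succ', eG_mul_aG]

lemma bG_mul_mono (i j : ℕ) : bG K * mono i j = (-1 : K) ^ i • mono i (j + 1) := by
  have hcomm : Commute (eG K) (aG K ^ i) :=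
    Commute.pow_right (eG_mul_aG.trans aG_mul_eG.symm) i
  rw [mono, mono, ← mul_assoc, ← mul_assoc, bG_mul_eG, bG_mul_aG_pow, pow_succ', ← mul_assoc,
    hcomm.eq, mul_assoc (aG K ^ i), eG_mul_bG, smul_mul_assoc, mul_assoc]

lemma cG_mul_mono (i j : ℕ) : cG K * mono i j = 0 := by
  simp only [mono, ← mul_assoc, cG_mul_eG, zero_mul]

lemma mono_mul_cG (i j : ℕ) : mono (K := K) i (j + 1) * cG K = 0 := by
  rw [mono, pow_succ, ← mul_assoc, mul_assoc _ (bG K), bG_mul_cG, mul_zero]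

noncomputable def ofPoly : MvPolynomial (Fin 2) K →ₗ[K] Galg K :=
  (basisMonomials (Fin 2) K).constr K fun d => mono (d 0) (d 1)

lemma ofPoly_monomial (d : Fin 2 →₀ ℕ) (r : K) :
    ofPoly (monomial d r) = r • mono (d 0) (d 1) := by
  have : monomial d r = r • basisMonomials (Fin 2) K d := by simp [smul_monomial]
  rw [this, map_smul, ofPoly, Module.Basis.constr_basis]

lemma ofPoly_C (r : K) : ofPoly (C r) = r • eG K := by
  rw [← monomial_zero', ofPoly_monomial]
  simp

lemma ofPoly_one : ofPoly (1 : MvPolynomial (Fin 2) K) = eG K := by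
  rw [← C_1, ofPoly_C, one_smul]

lemma eG_mul_ofPoly (f : MvPolynomial (Fin 2) K) : eG K * ofPoly f = ofPoly f := by
  induction f using induction_on' with
  | monomial d r => rw [ofPoly_monomial, mul_smul_comm, eG_mul_mono]
  | add p q hp hq => rw [map_add, mul_add, hp, hq]

lemma aG_mul_ofPoly (f : MvPolynomial (Fin 2) K) : aG K * ofPoly f = ofPoly (X 0 * f) := by
  induction f using induction_on' with
  | monomial d r =>
    rw [ofPoly_monomial, mul_smul_comm, aG_mul_mono, X_mul_monomial, ofPoly_monomial]
    simp [add_comm]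
  | add p q hp hq => rw [map_add, mul_add, hp, hq, mul_add, map_add]

lemma bG_mul_ofPoly (f : MvPolynomial (Fin 2) K) :
    bG K * ofPoly f = ofPoly (X 1 * negVar 0 f) := by
  induction f using induction_on' with
  | monomial d r =>
    rw [ofPoly_monomial, mul_smul_comm, bG_mul_mono, negVar_monomial, X_mul_monomial,
      ofPoly_monomial, smul_smul]
    simp [add_comm, mul_comm]
  | add p q hp hq => rw [map_add, mul_add, hp, hq, map_add, mul_add, map_add]

lemma cG_mul_ofPoly (f : MvPolynomial (Fin 2) K) : cG K * ofPoly f = 0 := by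
  induction f using induction_on' with
  | monomial d r => rw [ofPoly_monomial, mul_smul_comm, cG_mul_mono, smul_zero]
  | add p q hp hq => rw [map_add, mul_add, hp, hq, add_zero]

lemma ofPoly_X_one_mul_mul_cG (f : MvPolynomial (Fin 2) K) : ofPoly (X 1 * f) * cG K = 0 := by
  induction f using induction_on' with
  | monomial d r =>
    have h1 : (Finsupp.single 1 1 + d : Fin 2 →₀ ℕ) 1 = d 1 + 1 := by simp [add_comm]
    rw [X_mul_monomial, ofPoly_monomial, smul_mul_assoc, h1, mono_mul_cG, smul_zero]
  | add p q hp hq => rw [mul_add, map_add, add_mul, hp, hq, add_zero]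

variable (K) in
abbrev Model := MvPolynomial (Fin 2) K × MvPolynomial (Fin 2) K × K

@[simps] noncomputable def opE : Module.End K (Model K) where
  toFun w := (w.1, w.2.1, 0)
  map_add' _ _ := by simp
  map_smul' _ _ := by simp

@[simps] noncomputable def opA : Module.End K (Model K) where
  toFun w := (X 0 * w.1, X 0 * w.2.1, 0)
  map_add' _ _ := by simp [mul_add]
  map_smul' _ _ := by simp

@[simps] noncomputable def opB : Module.End K (Model K) where
  toFun w := (X 1 * negVar 0 w.1, 0, 0)
  map_add' _ _ := by simp [mul_add]
  map_smul' _ _ := by simp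

@[simps] noncomputable def opC : Module.End K (Model K) where
  toFun w := (0, C w.2.2, 0)
  map_add' _ _ := by simp
  map_smul' _ _ := by simp [smul_eq_C_mul]

noncomputable def rep : Galg K →ₐ[K] Module.End K (Model K) :=
  RingQuot.liftAlgHom K ⟨FreeAlgebra.lift K ![opE, opA, opB, opC], fun x y h => by
    cases h <;> refine LinearMap.ext fun w => ?_ <;> simp [Prod.ext_iff, mul_left_comm]⟩

@[simp] lemma rep_eG : rep (eG K) = opE := by simp [rep, eG]
@[simp] lemma rep_aG : rep (aG K) = opA := by simp [rep, aG]
@[simp] lemma rep_bG : rep (bG K) = opB := by simp [rep, bG]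
@[simp] lemma rep_cG : rep (cG K) = opC := by simp [rep, cG]

noncomputable def ofModel : Model K →ₗ[K] Galg K where
  toFun w := w.2.2 • (1 - eG K) + ofPoly w.1 + ofPoly w.2.1 * cG K
  map_add' _ _ := by simp only [Prod.fst_add, Prod.snd_add, map_add, add_smul, add_mul]; abel
  map_smul' _ _ := by simp [smul_add, smul_smul]

lemma ofModel_apply (w : Model K) :
    ofModel w = w.2.2 • (1 - eG K) + ofPoly w.1 + ofPoly w.2.1 * cG K := rfl

lemma ofModel_opE (w : Model K) : ofModel (opE w) = eG K * ofModel w := by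
  simp [ofModel_apply, mul_add, mul_sub, eG_mul_ofPoly, ← mul_assoc]

lemma ofModel_opA (w : Model K) : ofModel (opA w) = aG K * ofModel w := by
  simp [ofModel_apply, mul_add, mul_sub, aG_mul_ofPoly, ← mul_assoc]

lemma ofModel_opB (w : Model K) : ofModel (opB w) = bG K * ofModel w := by
  simp [ofModel_apply, mul_add, mul_sub, bG_mul_ofPoly, ofPoly_X_one_mul_mul_cG, ← mul_assoc]

lemma ofModel_opC (w : Model K) : ofModel (opC w) = cG K * ofModel w := by
  simp [ofModel_apply, mul_add, mul_sub, cG_mul_ofPoly, ofPoly_C, ← mul_assoc]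

lemma ofModel_rep (z : Galg K) (w : Model K) : ofModel (rep z w) = z * ofModel w := by
  have hz : z ∈ Algebra.adjoin K {eG K, aG K, bG K, cG K} :=
    adjoin_generators (K := K) ▸ Algebra.mem_top
  induction hz using Algebra.adjoin_induction generalizing w with
  | mem g hg =>
    rcases hg with rfl | rfl | rfl | rfl
    · simpa using ofModel_opE w
    · simpa using ofModel_opA w
    · simpa using ofModel_opB w
    · simpa using ofModel_opC w
  | algebraMap r => rw [AlgHom.commutes, Module.algebraMap_end_apply, map_smul, Algebra.smul_def]
  | add x y _ _ hx hy => rw [map_add, LinearMap.add_apply, map_add, hx, hy, add_mul]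
  | mul x y _ _ hx hy => rw [map_mul, Module.End.mul_apply, hx, hy, mul_assoc]

noncomputable def ev : Galg K →ₗ[K] Model K :=
  LinearMap.applyₗ ((1, 0, 1) : Model K) ∘ₗ rep.toLinearMap

lemma ev_apply (z : Galg K) : ev z = rep z (1, 0, 1) := rfl

lemma ev_mul (z w : Galg K) : ev (z * w) = rep z (ev w) := by
  rw [ev_apply, ev_apply, map_mul, Module.End.mul_apply]

lemma ofModel_ev (z : Galg K) : ofModel (ev z) = z := by
  rw [ev_apply, ofModel_rep]
  simp [ofModel_apply, ofPoly_one]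

lemma ev_injective : Function.Injective (ev (K := K)) :=
  Function.LeftInverse.injective ofModel_ev

lemma rep_mono {ε : K} {f : MvPolynomial (Fin 2) K} (hf : negVar 0 f = ε • f)
    (g : MvPolynomial (Fin 2) K) (c : K) (i j : ℕ) :
    rep (mono i j) (f, g, c) =
      (ε ^ j • (X 0 ^ i * X 1 ^ j * f), substY0 K (X 0 ^ i * X 1 ^ j) * g, 0) := by
  induction i with
  | zero =>
    induction j with
    | zero => simp
    | succ j ih =>
      have : mono (K := K) 0 (j + 1) = bG K * mono 0 j := by simp [bG_mul_mono]
      rw [this, map_mul, Module.End.mul_apply, ih, rep_bG, opB_apply]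
      simp [hf, pow_succ, smul_smul, mul_comm, mul_left_comm]
  | succ i ih =>
    rw [← aG_mul_mono, map_mul, Module.End.mul_apply, ih, rep_aG, opA_apply]
    simp [pow_succ', mul_assoc]

lemma rep_ofPoly_of_even {f' : MvPolynomial (Fin 2) K} (hf' : negVar 0 f' = f')
    (f g' : MvPolynomial (Fin 2) K) (c' : K) :
    rep (ofPoly f) (f', g', c') = (f * f', substY0 K f * g', 0) := by
  induction f using induction_on' with
  | monomial d r =>
    rw [ofPoly_monomial, map_smul, LinearMap.smul_apply,
      rep_mono (ε := 1) (by rw [hf', one_smul]), monomial_eq_smul_X_pow]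
    simp
  | add p q hp hq =>
    rw [map_add, map_add, LinearMap.add_apply, hp, hq]
    simp [add_mul]

lemma rep_ofPoly_of_odd {f' : MvPolynomial (Fin 2) K} (hf' : negVar 0 f' = -f')
    (f g' : MvPolynomial (Fin 2) K) (c' : K) :
    rep (ofPoly f) (f', g', c') = (negVar 1 f * f', substY0 K f * g', 0) := by
  induction f using induction_on' with
  | monomial d r =>
    rw [ofPoly_monomial, map_smul, LinearMap.smul_apply,
      rep_mono (ε := -1) (by rw [hf', neg_one_smul]), negVar_monomial, monomial_eq_smul_X_pow,
      monomial_eq_smul_X_pow]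
    simp [smul_smul, mul_comm]
  | add p q hp hq =>
    rw [map_add, map_add, map_add, LinearMap.add_apply, hp, hq]
    simp [add_mul]

lemma rep_ofModel_of_even {f' : MvPolynomial (Fin 2) K} (hf' : negVar 0 f' = f')
    (f g g' : MvPolynomial (Fin 2) K) (c c' : K) :
    rep (ofModel (f, g, c)) (f', g', c') =
      (f * f', substY0 K f * g' + substY0 K g * C c', c * c') := by
  simp [ofModel_apply, rep_ofPoly_of_even hf', rep_ofPoly_of_even (map_zero (negVar 0)), mul_comm]

lemma rep_ofModel_of_odd {f' : MvPolynomial (Fin 2) K} (hf' : negVar 0 f' = -f')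
    (f g g' : MvPolynomial (Fin 2) K) (c c' : K) :
    rep (ofModel (f, g, c)) (f', g', c') =
      (negVar 1 f * f', substY0 K f * g' + substY0 K g * C c', c * c') := by
  simp [ofModel_apply, rep_ofPoly_of_odd hf', rep_ofPoly_of_even (map_zero (negVar 0)), mul_comm]

lemma ev_ofModel (f g : MvPolynomial (Fin 2) K) (c : K) :
    ev (ofModel (f, g, c)) = (f, substY0 K g, c) := by
  rw [ev_apply, rep_ofModel_of_even (map_one (negVar 0))]
  simp

@[simp] lemma ev_eG : ev (eG K) = (1, 0, 0) := by simp [ev_apply]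
@[simp] lemma ev_aG : ev (aG K) = (X 0, 0, 0) := by simp [ev_apply]
@[simp] lemma ev_bG : ev (bG K) = (X 1, 0, 0) := by simp [ev_apply]
@[simp] lemma ev_cG : ev (cG K) = (0, 1, 0) := by simp [ev_apply]

lemma commute_ofModel_eG_iff (f g : MvPolynomial (Fin 2) K) (c : K) :
    Commute (ofModel (f, g, c)) (eG K) ↔ substY0 K g = 0 := by
  rw [Commute, SemiconjBy, ← ev_injective.eq_iff, ev_mul, ev_mul, ev_ofModel, ev_eG,
    rep_ofModel_of_even (map_one _), rep_eG, opE_apply]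
  simp [eq_comm]

lemma commute_ofModel_aG_iff (f : MvPolynomial (Fin 2) K) (c : K) :
    Commute (ofModel (f, 0, c)) (aG K) ↔ negVar 1 f = f := by
  rw [Commute, SemiconjBy, ← ev_injective.eq_iff, ev_mul, ev_mul, ev_ofModel, ev_aG,
    rep_ofModel_of_odd (negVar_X_self 0), rep_aG, opA_apply]
  simp [mul_comm (X 0) f, mul_left_inj' (X_ne_zero (0 : Fin 2))]

lemma commute_ofModel_bG_iff (f : MvPolynomial (Fin 2) K) (c : K) :
    Commute (ofModel (f, 0, c)) (bG K) ↔ negVar 0 f = f := by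
  rw [Commute, SemiconjBy, ← ev_injective.eq_iff, ev_mul, ev_mul, ev_ofModel, ev_bG,
    rep_ofModel_of_even (negVar_X_of_ne one_ne_zero), rep_bG, opB_apply]
  simp [mul_comm f, mul_right_inj' (X_ne_zero (1 : Fin 2)), eq_comm]

lemma commute_ofModel_cG_iff (f : MvPolynomial (Fin 2) K) (c : K) :
    Commute (ofModel (f, 0, c)) (cG K) ↔ substY0 K f = C c := by
  rw [Commute, SemiconjBy, ← ev_injective.eq_iff, ev_mul, ev_mul, ev_ofModel, ev_cG,
    rep_ofModel_of_even (map_zero _), rep_cG, opC_apply]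
  simp

lemma mem_center_iff {z : Galg K} : z ∈ Subalgebra.center K (Galg K) ↔
    (ev z).2.1 = 0 ∧ negVar 0 (ev z).1 = (ev z).1 ∧ negVar 1 (ev z).1 = (ev z).1 ∧
      substY0 K (ev z).1 = C (ev z).2.2 := by
  rcases hev : ev z with ⟨f, g, c⟩
  have hz : z = ofModel (f, g, c) := hev ▸ (ofModel_ev z).symm
  have hg : substY0 K g = g := by
    simpa [← hz, hev, eq_comm] using congrArg (fun w => w.2.1) (ev_ofModel f g c)
  subst hz
  dsimp only
  constructor
  · intro hcen
    obtain ⟨he, ha, hb, hc⟩ := mem_center_iff_commute.1 hcen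
    obtain rfl : g = 0 := hg ▸ (commute_ofModel_eG_iff f g c).1 he
    exact ⟨rfl, (commute_ofModel_bG_iff f c).1 hb, (commute_ofModel_aG_iff f c).1 ha,
      (commute_ofModel_cG_iff f c).1 hc⟩
  · rintro ⟨rfl, h0, h1, hC⟩
    rw [mem_center_iff_commute, commute_ofModel_eG_iff, commute_ofModel_aG_iff,
      commute_ofModel_bG_iff, commute_ofModel_cG_iff]
    exact ⟨map_zero _, h1, h0, hC⟩

variable (K) in
noncomputable def centerImage : Subalgebra K (MvPolynomial (Fin 2) K) :=
  signInvariants (Fin 2) K ⊓ Rsub K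

lemma mem_centerImage_iff {f : MvPolynomial (Fin 2) K} : f ∈ centerImage K ↔
    negVar 0 f = f ∧ negVar 1 f = f ∧ ∃ r, substY0 K f = C r := by
  rw [centerImage, Algebra.mem_inf, mem_signInvariants, Fin.forall_fin_two, mem_Rsub_iff, and_assoc]

lemma ev_mul_fst_of_mem_center {z w : Galg K} (hz : z ∈ Subalgebra.center K (Galg K))
    (hw : w ∈ Subalgebra.center K (Galg K)) : (ev (z * w)).1 = (ev z).1 * (ev w).1 := by
  obtain ⟨hz0, -, -, -⟩ := mem_center_iff.1 hz
  obtain ⟨-, hw0, -, -⟩ := mem_center_iff.1 hw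
  have hz' : z = ofModel ((ev z).1, 0, (ev z).2.2) := by rw [← hz0]; exact (ofModel_ev z).symm
  conv_lhs => rw [ev_mul, hz', rep_ofModel_of_even hw0]

variable (K) in
noncomputable def centerToPoly : Subalgebra.center K (Galg K) →ₐ[K] MvPolynomial (Fin 2) K :=
  AlgHom.ofLinearMap
    (LinearMap.fst K _ _ ∘ₗ ev ∘ₗ (Subalgebra.center K (Galg K)).val.toLinearMap)
    (by simp [ev_apply]) fun z w => ev_mul_fst_of_mem_center z.2 w.2

lemma centerToPoly_apply (z : Subalgebra.center K (Galg K)) :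
    centerToPoly K z = (ev (z : Galg K)).1 :=
  rfl

lemma centerToPoly_mem (z : Subalgebra.center K (Galg K)) : centerToPoly K z ∈ centerImage K := by
  obtain ⟨-, h0, h1, hC⟩ := mem_center_iff.1 z.2
  exact mem_centerImage_iff.2 ⟨h0, h1, _, hC⟩

lemma bijective_centerToPoly :
    Function.Bijective ((centerToPoly K).codRestrict (centerImage K) centerToPoly_mem) := by
  refine ⟨fun z w h => ?_, fun ⟨f, hf⟩ => ?_⟩
  · have hf : (ev (z : Galg K)).1 = (ev (w : Galg K)).1 := congrArg Subtype.val h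
    obtain ⟨hz0, -, -, hzC⟩ := mem_center_iff.1 z.2
    obtain ⟨hw0, -, -, hwC⟩ := mem_center_iff.1 w.2
    have hc : (ev (z : Galg K)).2.2 = (ev (w : Galg K)).2.2 :=
      C_injective _ _ (by rw [← hzC, ← hwC, hf])
    exact Subtype.ext (ev_injective (Prod.ext hf (Prod.ext (hz0.trans hw0.symm) hc)))
  · obtain ⟨h0, h1, r, hr⟩ := mem_centerImage_iff.1 hf
    have hev : ev (ofModel (f, 0, r)) = (f, 0, r) := by simp [ev_ofModel]
    have hcen : ofModel (f, 0, r) ∈ Subalgebra.center K (Galg K) :=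
      mem_center_iff.2 (by rw [hev]; exact ⟨rfl, h0, h1, hr⟩)
    exact ⟨⟨_, hcen⟩, Subtype.ext (by simp [centerToPoly_apply, hev])⟩

variable (K) in
noncomputable def centerEquiv : Subalgebra.center K (Galg K) ≃ₐ[K] centerImage K :=
  AlgEquiv.ofBijective _ bijective_centerToPoly

lemma centerImage_eq_Rsub_of_two_eq_zero (h2 : (2 : K) = 0) :
    centerImage K = Rsub K := by
  rw [centerImage, signInvariants_eq_top h2, top_inf_eq]

lemma centerImage_eq_map_expand_two (h2 : (2 : K) ≠ 0) :
    centerImage K = (Rsub K).map (expand 2) := by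
  rw [centerImage, signInvariants_eq_range_expand h2, Rsub_map_expand two_pos]

end Galg

/-- For any field `K`, the center of `Γ` is isomorphic as a `K`-algebra to the
subalgebra `R = { f ∈ K[x,y] : f(x,0) is a constant } = K·1 + y·K[x,y]` of the
polynomial ring `K[x,y]`. -/
theorem center_iso_R (K : Type*) [Field K] :
    Nonempty ((Subalgebra.center K (Galg K)) ≃ₐ[K] Rsub K) := by
  refine ⟨(Galg.centerEquiv K).trans ?_⟩
  by_cases h2 : (2 : K) = 0
  · exact Subalgebra.equivOfEq _ _ (Galg.centerImage_eq_Rsub_of_two_eq_zero h2)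
  · exact (Subalgebra.equivOfEq _ _ (Galg.centerImage_eq_map_expand_two h2)).trans
      ((Rsub K).equivMapOfInjective _ (MvPolynomial.expand_injective two_pos)).symm
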